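/- Let A, B : I^n → I be semicopulas with A ≤ B and fix an integer k with 1 ≤ k ≤ n. Then the following are equivalent: (i) there exists a k-increasing semicopula C : I^n → I such that A ≤ C ≤ B; (ii) L_k^{(A,B)}(DU) ≥ 0 for all DU ∈ R_k(I^n). -/

import Mathlib

open scoped Classical BigOperators

namespace KIncr

/-- Points of the ambient space `ℝ^n`. -/
abbrev Pt (n : ℕ) := Fin n → ℝ

/-- Membership in the unit cube `I^n = [0,1]^n`. -/
def inCube {n : ℕ} (x : Pt n) : Prop := ∀ i, x i ∈ Set.Icc (0:ℝ) 1

/-- The unit cube as a set. -/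
def cubeSet (n : ℕ) : Set (Pt n) := {x | inCube x}

/-- Vertices of the unit cube `I^n`. -/
def isCubeVertex {n : ℕ} (x : Pt n) : Prop := ∀ i, x i = 0 ∨ x i = 1

/-- A (formal) box, given by its lower-left and upper-right corners. -/
structure Box (n : ℕ) where
  lo : Pt n
  hi : Pt n

/-- `R` is a `k`-box in `I^n`: exactly `k` coordinates are nondegenerate. -/
def Box.IsKBox {n : ℕ} (k : ℕ) (R : Box n) : Prop :=
  inCube R.lo ∧ inCube R.hi ∧ (∀ i, R.lo i ≤ R.hi i) ∧
    (Finset.univ.filter (fun i => R.lo i < R.hi i)).card = k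

/-- `v` is a vertex of the box `R`. -/
def Box.IsVertex {n : ℕ} (R : Box n) (v : Pt n) : Prop :=
  ∀ i, v i = R.lo i ∨ v i = R.hi i

/-- The (finite) set of vertices of a box. -/
noncomputable def Box.vertices {n : ℕ} (R : Box n) : Finset (Pt n) :=
  Finset.image (fun ε : Fin n → Bool => fun i => if ε i then R.hi i else R.lo i)
    Finset.univ

/-- The sign `(-1)^(m-(n-k))` of a vertex `v` of a `k`-box, where
`m = #{i : v i = lo i}`;  since `m ≥ n - k`, this equals `(-1)^(m+(n-k))`. -/
noncomputable def Box.sign {n : ℕ} (k : ℕ) (R : Box n) (v : Pt n) : ℤ :=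
  (-1) ^ ((Finset.univ.filter (fun i => v i = R.lo i)).card + (n - k))

/-- The multiplicity `m_R(u)` of a point `u` with respect to a `k`-box `R`. -/
noncomputable def Box.mult {n : ℕ} (k : ℕ) (R : Box n) (u : Pt n) : ℤ :=
  if R.IsVertex u then R.sign k u else 0

/-- `V_{A,k}(R) = ∑_{v ∈ ver R} sign_R(v) · A(v)`. -/
noncomputable def Vvol {n : ℕ} (k : ℕ) (A : Pt n → ℝ) (R : Box n) : ℝ :=
  ∑ v ∈ R.vertices, (R.sign k v : ℝ) * A v

/-- A function is `k`-increasing on `D` if `V_{A,k}(R) ≥ 0` for every `k`-box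
with all vertices in `D`. -/
def KIncreasingOn {n : ℕ} (k : ℕ) (D : Set (Pt n)) (A : Pt n → ℝ) : Prop :=
  ∀ R : Box n, R.IsKBox k → (∀ v ∈ R.vertices, v ∈ D) → 0 ≤ Vvol k A R

/-- The multiplicity `m_DU(u)` of a point with respect to a formal (multiset)
disjoint union of `k`-boxes. -/
noncomputable def multDU {n : ℕ} (k : ℕ) (DU : Multiset (Box n)) (u : Pt n) : ℤ :=
  (DU.map (fun R => R.mult k u)).sum

/-- `DU ∈ R_k(D)`: every box of the multiset `DU` is a `k`-box with all its
vertices in `D`. -/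
def memRk {n : ℕ} (k : ℕ) (D : Set (Pt n)) (DU : Multiset (Box n)) : Prop :=
  ∀ R ∈ DU, R.IsKBox k ∧ ∀ v ∈ R.vertices, v ∈ D

/-- `L_k^{(A,B)}(DU) = ∑_{m_DU(u)>0} m_DU(u)·B(u) + ∑_{m_DU(u)<0} m_DU(u)·A(u)`. -/
noncomputable def Lk {n : ℕ} (k : ℕ) (A B : Pt n → ℝ) (DU : Multiset (Box n)) : ℝ :=
  ∑ u ∈ DU.toFinset.biUnion Box.vertices,
    (if 0 < multDU k DU u then (multDU k DU u : ℝ) * B u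
     else if multDU k DU u < 0 then (multDU k DU u : ℝ) * A u else 0)

/-- `P⁻_{k,D}^{(A,B)}(x)`, with the Mathlib convention `sInf ∅ = 0`. -/
noncomputable def Pneg {n : ℕ} (k : ℕ) (D : Set (Pt n)) (A B : Pt n → ℝ) (x : Pt n) : ℝ :=
  sInf {r : ℝ | ∃ DU : Multiset (Box n), memRk k D DU ∧ multDU k DU x < 0 ∧
    r = Lk k A B DU / |(multDU k DU x : ℝ)|}

/-- `P⁺_{k,D}^{(A,B)}(x)`, with the Mathlib convention `sInf ∅ = 0`. -/
noncomputable def Ppos {n : ℕ} (k : ℕ) (D : Set (Pt n)) (A B : Pt n → ℝ) (x : Pt n) : ℝ :=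
  sInf {r : ℝ | ∃ DU : Multiset (Box n), memRk k D DU ∧ 0 < multDU k DU x ∧
    r = Lk k A B DU / |(multDU k DU x : ℝ)|}

/-- `γ_{k,D}^{(A,B)}(x) = min {P⁻_{k,D}^{(A,B)}(x), B(x) - A(x)}`. -/
noncomputable def gammaK {n : ℕ} (k : ℕ) (D : Set (Pt n)) (A B : Pt n → ℝ) (x : Pt n) : ℝ :=
  min (Pneg k D A B x) (B x - A x)

/-- `δ_{k,D}^{(A,B)}(x) = min {P⁺_{k,D}^{(A,B)}(x), B(x) - A(x)}`. -/
noncomputable def deltaK {n : ℕ} (k : ℕ) (D : Set (Pt n)) (A B : Pt n → ℝ) (x : Pt n) : ℝ :=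
  min (Ppos k D A B x) (B x - A x)

/-- A dense countably infinite mesh `D = ∏ δᵢ` in `I^n`. -/
def IsMesh {n : ℕ} (D : Set (Pt n)) : Prop :=
  ∃ δ : Fin n → Set ℝ,
    (∀ i, δ i ⊆ Set.Icc (0:ℝ) 1 ∧ (δ i).Countable ∧ (δ i).Infinite ∧
      Set.Icc (0:ℝ) 1 ⊆ closure (δ i) ∧ (0:ℝ) ∈ δ i ∧ (1:ℝ) ∈ δ i) ∧
    D = {x : Pt n | ∀ i, x i ∈ δ i}

/-- `A` is grounded: it vanishes whenever some coordinate is `0`. -/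
def Grounded {n : ℕ} (A : Pt n → ℝ) : Prop :=
  ∀ x : Pt n, inCube x → (∃ i, x i = 0) → A x = 0

/-- `A` is 1-increasing (increasing in each variable). -/
def OneIncreasing {n : ℕ} (A : Pt n → ℝ) : Prop :=
  ∀ x y : Pt n, inCube x → inCube y → (∀ i, x i ≤ y i) → A x ≤ A y

/-- `A` has uniform marginals. -/
def UniformMarginals {n : ℕ} (A : Pt n → ℝ) : Prop :=
  ∀ i : Fin n, ∀ t ∈ Set.Icc (0:ℝ) 1, A (Function.update (fun _ => (1:ℝ)) i t) = t

/-- `A` is a standardized function. -/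
def Standardized {n : ℕ} (A : Pt n → ℝ) : Prop :=
  Grounded A ∧ OneIncreasing A ∧ A (fun _ => (1:ℝ)) = 1

/-- `A` is a semicopula. -/
def Semicopula {n : ℕ} (A : Pt n → ℝ) : Prop :=
  Grounded A ∧ OneIncreasing A ∧ UniformMarginals A

/-- `A` maps the unit cube into `I = [0,1]`. -/
def MapsToI {n : ℕ} (A : Pt n → ℝ) : Prop :=
  ∀ x : Pt n, inCube x → A x ∈ Set.Icc (0:ℝ) 1

/-- Condition S: all discontinuities of all sections of `A` lie in the
countable set `S`. -/
def CondS {n : ℕ} (A : Pt n → ℝ) (S : Set ℝ) : Prop :=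
  ∀ u : Pt n, inCube u → ∀ i : Fin n, ∀ t ∈ Set.Icc (0:ℝ) 1, t ∉ S →
    ContinuousWithinAt (fun s => A (Function.update u i s)) (Set.Icc (0:ℝ) 1) t

/-- A quasi-copula: a semicopula that is 1-Lipschitz w.r.t. the ℓ¹-norm. -/
def QuasiCopula {n : ℕ} (A : Pt n → ℝ) : Prop :=
  Semicopula A ∧ ∀ x y : Pt n, inCube x → inCube y → |A x - A y| ≤ ∑ i, |x i - y i|

end KIncr

/-!
(i) ⇒ (ii): if `A ≤ C ≤ B`, every term of `L_k^{(A,B)}(DU)` dominates `m_DU(u) C(u)`, and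
`∑ u, m_DU(u) C(u) = ∑_{R ∈ DU} V_{C,k}(R) ≥ 0`.

(ii) ⇒ (i): the candidates form the compact convex order interval `[A ⊓ B, B]` of `ℝ^(ℝ^n)`
(product topology) and each constraint `V_{C,k}(R) ≥ 0` is closed, so it suffices to satisfy
finitely many boxes `R_j`. If that fails, separating the image of `[A ⊓ B, B]` under
`C ↦ (V_{C,k}(R_j))_j` from the nonnegative orthant gives weights `w ≥ 0` with
`∑ j, w_j V_{C,k}(R_j) < 0` for all candidates; maximizing over `C` turns this into `L(w) < 0`
for the extension `L` of `L_k^{(A,B)}` to real weights. As `L` is continuous and positively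
homogeneous, some natural weights `c` also give `L(c) < 0`, and the multiset with `c_j` copies of
`R_j` violates (ii). The resulting `C` inherits groundedness and uniform marginals from `A` and
`B`, and a grounded `k`-increasing function is increasing in each variable: on a `k`-box with
`k - 1` sides reaching down to `0`, only two vertices are off the zero set of `C`.
-/

namespace KIncr

open Finset

variable {n k : ℕ}

namespace Box

lemma mem_vertices {R : Box n} {v : Pt n} : v ∈ R.vertices ↔ R.IsVertex v := by
  constructor
  · intro hv
    obtain ⟨ε, -, rfl⟩ := Finset.mem_image.1 hv
    intro i
    by_cases h : ε i <;> simp [h]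
  · intro hv
    refine Finset.mem_image.2 ⟨fun i => decide (v i = R.hi i), Finset.mem_univ _, ?_⟩
    funext i
    rcases hv i with h | h
    · by_cases h2 : v i = R.hi i <;> simp [h2, h.symm]
    · simp [h]

lemma IsKBox.inCube_of_mem_vertices {R : Box n} (hR : R.IsKBox k) {v : Pt n}
    (hv : v ∈ R.vertices) : inCube v := by
  intro i
  rcases mem_vertices.1 hv i with h | h <;> rw [h]
  exacts [hR.1 i, hR.2.1 i]

lemma mult_of_notMem_vertices {R : Box n} {u : Pt n} (h : u ∉ R.vertices) :
    R.mult k u = 0 :=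
  if_neg fun hv => h (mem_vertices.2 hv)

lemma sum_mult_mul {R : Box n} {V : Finset (Pt n)} (hV : R.vertices ⊆ V) (C : Pt n → ℝ) :
    ∑ z ∈ V, (R.mult k z : ℝ) * C z = Vvol k C R := by
  rw [Vvol, ← Finset.sum_subset hV fun z _ hz => by simp [mult_of_notMem_vertices hz]]
  exact Finset.sum_congr rfl fun z hz => by rw [Box.mult, if_pos (mem_vertices.1 hz)]

end Box

lemma multDU_cons (R : Box n) (DU : Multiset (Box n)) (z : Pt n) :
    multDU k (R ::ₘ DU) z = R.mult k z + multDU k DU z := by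
  simp [multDU]

lemma multDU_eq_zero {DU : Multiset (Box n)} {z : Pt n} (h : ∀ R ∈ DU, z ∉ R.vertices) :
    multDU k DU z = 0 :=
  Multiset.sum_eq_zero fun m hm => by
    obtain ⟨R, hR, rfl⟩ := Multiset.mem_map.1 hm
    exact Box.mult_of_notMem_vertices (h R hR)

lemma sum_multDU_mul {DU : Multiset (Box n)} {V : Finset (Pt n)}
    (hV : ∀ R ∈ DU, R.vertices ⊆ V) (C : Pt n → ℝ) :
    ∑ z ∈ V, (multDU k DU z : ℝ) * C z = (DU.map (Vvol k C)).sum := by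
  induction DU using Multiset.induction_on with
  | empty => simp [multDU]
  | cons R DU ih =>
    simp only [multDU_cons, Int.cast_add, add_mul, Finset.sum_add_distrib, Multiset.map_cons,
      Multiset.sum_cons]
    rw [Box.sum_mult_mul (hV R (Multiset.mem_cons_self R DU)),
      ih fun R' hR' => hV R' (Multiset.mem_cons_of_mem hR')]

lemma ite_sign_mul_eq_max {a b : ℝ} (hab : a ≤ b) (m : ℤ) :
    (if 0 < m then (m : ℝ) * b else if m < 0 then (m : ℝ) * a else 0) =
      max ((m : ℝ) * a) ((m : ℝ) * b) := by
  rcases lt_trichotomy m 0 with hm | rfl | hm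
  · have : (m : ℝ) ≤ 0 := by exact_mod_cast hm.le
    rw [if_neg hm.not_gt, if_pos hm, max_eq_left (mul_le_mul_of_nonpos_left hab this)]
  · simp
  · have : (0 : ℝ) ≤ m := by exact_mod_cast hm.le
    rw [if_pos hm, max_eq_right (mul_le_mul_of_nonneg_left hab this)]

lemma Lk_eq_sum_max {A B : Pt n → ℝ} {DU : Multiset (Box n)} {V : Finset (Pt n)}
    (hV : DU.toFinset.biUnion Box.vertices ⊆ V) (hAB : ∀ z ∈ V, A z ≤ B z) :
    Lk k A B DU = ∑ z ∈ V, max ((multDU k DU z : ℝ) * A z) ((multDU k DU z : ℝ) * B z) := by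
  rw [Lk, Finset.sum_subset hV fun z _ hz => ?_]
  · exact Finset.sum_congr rfl fun z hz => ite_sign_mul_eq_max (hAB z hz) _
  · rw [multDU_eq_zero fun R hR hzR => hz (Finset.mem_biUnion.2
      ⟨R, Multiset.mem_toFinset.2 hR, hzR⟩)]
    simp

lemma mul_le_max_mul {a b c : ℝ} (hac : a ≤ c) (hcb : c ≤ b) (m : ℝ) :
    m * c ≤ max (m * a) (m * b) := by
  rcases le_total 0 m with hm | hm
  · exact le_max_of_le_right (mul_le_mul_of_nonneg_left hcb hm)
  · exact le_max_of_le_left (mul_le_mul_of_nonpos_left hac hm)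

lemma Lk_nonneg_of_kIncreasingOn {A B C : Pt n → ℝ} (hC : KIncreasingOn k (cubeSet n) C)
    (hACB : ∀ x : Pt n, inCube x → A x ≤ C x ∧ C x ≤ B x) {DU : Multiset (Box n)}
    (hDU : memRk k (cubeSet n) DU) : 0 ≤ Lk k A B DU := by
  set V := DU.toFinset.biUnion Box.vertices
  have hVsub : ∀ R ∈ DU, R.vertices ⊆ V := fun R hR v hv =>
    Finset.mem_biUnion.2 ⟨R, Multiset.mem_toFinset.2 hR, hv⟩
  have hACB' : ∀ z ∈ V, A z ≤ C z ∧ C z ≤ B z := fun z hz => by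
    obtain ⟨R, hR, hzR⟩ := Finset.mem_biUnion.1 hz
    exact hACB z ((hDU R (Multiset.mem_toFinset.1 hR)).1.inCube_of_mem_vertices hzR)
  calc 0 ≤ (DU.map (Vvol k C)).sum :=
        Multiset.sum_nonneg fun x hx => by
          obtain ⟨R, hR, rfl⟩ := Multiset.mem_map.1 hx
          exact hC R (hDU R hR).1 (hDU R hR).2
    _ = ∑ z ∈ V, (multDU k DU z : ℝ) * C z := (sum_multDU_mul hVsub C).symm
    _ ≤ ∑ z ∈ V, max ((multDU k DU z : ℝ) * A z) ((multDU k DU z : ℝ) * B z) :=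
        Finset.sum_le_sum fun z hz => mul_le_max_mul (hACB' z hz).1 (hACB' z hz).2 _
    _ = Lk k A B DU :=
        (Lk_eq_sum_max subset_rfl fun z hz => (hACB' z hz).1.trans (hACB' z hz).2).symm

/-- Coordinate `i` runs over `[s, t]`, each coordinate `j ∈ T` over `[0, u j]`, the others are
frozen at `u j`. -/
def sliceBox (u : Pt n) (i : Fin n) (T : Finset (Fin n)) (s t : ℝ) : Box n :=
  ⟨Function.update (fun j => if j ∈ T then 0 else u j) i s, Function.update u i t⟩

section sliceBox

variable {u : Pt n} {i : Fin n} {T : Finset (Fin n)} {s t : ℝ}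

lemma sliceBox_isKBox (hu : inCube u) (hiT : i ∉ T) (hT : ∀ j ∈ T, 0 < u j)
    (hs : 0 ≤ s) (hst : s < t) (ht : t ≤ 1) (hk : T.card + 1 = k) :
    (sliceBox u i T s t).IsKBox k := by
  refine ⟨fun j => ?_, fun j => ?_, fun j => ?_, ?_⟩
  · rcases eq_or_ne j i with rfl | hj
    · simp [sliceBox, hs, hst.le.trans ht]
    · by_cases hjT : j ∈ T <;> simp [sliceBox, hj, hjT, hu j]
  · rcases eq_or_ne j i with rfl | hj
    · simp [sliceBox, hs.trans hst.le, ht]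
    · simp [sliceBox, hj, hu j]
  · rcases eq_or_ne j i with rfl | hj
    · simp [sliceBox, hst.le]
    · by_cases hjT : j ∈ T <;> simp [sliceBox, hj, hjT, (hu j).1]
  · rw [← hk, ← Finset.card_insert_of_notMem hiT]
    congr 1
    ext j
    simp only [Finset.mem_filter, Finset.mem_univ, true_and, Finset.mem_insert]
    rcases eq_or_ne j i with rfl | hj
    · simp [sliceBox, hst]
    · by_cases hjT : j ∈ T
      · simp [sliceBox, hj, hjT, hT j hjT]
      · simp [sliceBox, hj, hjT]

lemma sliceBox_sign_lo (hiT : i ∉ T) (hT : ∀ j ∈ T, 0 < u j) (hk : T.card + 1 = k)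
    (hkn : k ≤ n) : (sliceBox u i T s t).sign k (Function.update u i s) = -1 := by
  have hfilter : (Finset.univ.filter fun j =>
      Function.update u i s j = (sliceBox u i T s t).lo j) = Tᶜ := by
    ext j
    simp only [Finset.mem_filter, Finset.mem_univ, true_and, Finset.mem_compl]
    rcases eq_or_ne j i with rfl | hj
    · simp [sliceBox, hiT]
    · by_cases hjT : j ∈ T
      · simp [sliceBox, hj, hjT, (hT j hjT).ne']
      · simp [sliceBox, hj, hjT]
  rw [Box.sign, hfilter, Finset.card_compl, Fintype.card_fin]
  exact Odd.neg_one_pow ⟨n - k, by omega⟩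

lemma sliceBox_sign_hi (hiT : i ∉ T) (hT : ∀ j ∈ T, 0 < u j) (hst : s < t)
    (hk : T.card + 1 = k) (hkn : k ≤ n) :
    (sliceBox u i T s t).sign k (Function.update u i t) = 1 := by
  have hfilter : (Finset.univ.filter fun j =>
      Function.update u i t j = (sliceBox u i T s t).lo j) = (insert i T)ᶜ := by
    ext j
    simp only [Finset.mem_filter, Finset.mem_univ, true_and, Finset.mem_compl,
      Finset.mem_insert]
    rcases eq_or_ne j i with rfl | hj
    · simp [sliceBox, hst.ne']
    · by_cases hjT : j ∈ T
      · simp [sliceBox, hj, hjT, (hT j hjT).ne']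
      · simp [sliceBox, hj, hjT]
  rw [Box.sign, hfilter, Finset.card_compl, Fintype.card_fin,
    Finset.card_insert_of_notMem hiT]
  exact Even.neg_one_pow ⟨n - k, by omega⟩

lemma sliceBox_vertex_cases {v : Pt n} (hv : v ∈ (sliceBox u i T s t).vertices)
    (hv0 : ∀ j ∈ T, v j ≠ 0) : v = Function.update u i s ∨ v = Function.update u i t := by
  have hv' := Box.mem_vertices.1 hv
  have hvj : ∀ j ≠ i, v j = u j := fun j hj => by
    by_cases hjT : j ∈ T
    · simpa [sliceBox, hj, hjT, hv0 j hjT] using hv' j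
    · simpa [sliceBox, hj, hjT] using hv' j
  have hvi := hv' i
  simp only [sliceBox, Function.update_self] at hvi
  refine hvi.imp (fun h => ?_) (fun h => ?_) <;> funext j <;>
    rcases eq_or_ne j i with rfl | hj <;> simp [*]

lemma Vvol_sliceBox {C : Pt n → ℝ} (hC : Grounded C) (hu : inCube u) (hiT : i ∉ T)
    (hT : ∀ j ∈ T, 0 < u j) (hs : 0 ≤ s) (hst : s < t) (ht : t ≤ 1) (hk : T.card + 1 = k)
    (hkn : k ≤ n) :
    Vvol k C (sliceBox u i T s t) = C (Function.update u i t) - C (Function.update u i s) := by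
  have hbox := sliceBox_isKBox hu hiT hT hs hst ht hk
  have hne : Function.update u i t ≠ Function.update u i s := fun h => hst.ne' (by
    simpa using congrFun h i)
  rw [Vvol, Finset.sum_eq_add _ _ hne (fun v hv hv2 => ?_) (fun h => ?_) (fun h => ?_),
    sliceBox_sign_hi hiT hT hst hk hkn, sliceBox_sign_lo hiT hT hk hkn]
  · push_cast; ring
  · obtain ⟨j, hjT, hj0⟩ : ∃ j ∈ T, v j = 0 := by
      by_contra! h
      rcases sliceBox_vertex_cases hv h with h' | h'
      exacts [hv2.2 h', hv2.1 h']
    rw [hC v (hbox.inCube_of_mem_vertices hv) ⟨j, hj0⟩, mul_zero]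
  all_goals
    refine absurd (Box.mem_vertices.2 fun j => ?_) h
    rcases eq_or_ne j i with rfl | hj
    · simp [sliceBox]
    · simp [sliceBox, hj]

end sliceBox

lemma Grounded.update_mono_of_kIncreasing {C : Pt n → ℝ} (hC : Grounded C) (hk1 : 1 ≤ k)
    (hkn : k ≤ n) (hki : ∀ R : Box n, R.IsKBox k → 0 ≤ Vvol k C R) {u : Pt n}
    (hu : inCube u) (i : Fin n) {s t : ℝ} (hs : 0 ≤ s) (hst : s ≤ t) (ht : t ≤ 1) :
    C (Function.update u i s) ≤ C (Function.update u i t) := by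
  have hcube : ∀ r ∈ Set.Icc (0 : ℝ) 1, inCube (Function.update u i r) := fun r hr j => by
    rcases eq_or_ne j i with rfl | hj
    · simpa using hr
    · simpa [hj] using hu j
  by_cases hzero : ∃ j ≠ i, u j = 0
  · obtain ⟨j, hji, hj0⟩ := hzero
    rw [hC _ (hcube s ⟨hs, hst.trans ht⟩) ⟨j, by simp [hji, hj0]⟩,
      hC _ (hcube t ⟨hs.trans hst, ht⟩) ⟨j, by simp [hji, hj0]⟩]
  push Not at hzero
  rcases hst.eq_or_lt with rfl | hst
  · exact le_rfl
  obtain ⟨T, hTsub, hTcard⟩ : ∃ T ⊆ Finset.univ.erase i, T.card = k - 1 :=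
    Finset.exists_subset_card_eq (by simp; omega)
  have hiT : i ∉ T := fun h => (Finset.mem_erase.1 (hTsub h)).1 rfl
  have hT : ∀ j ∈ T, 0 < u j := fun j hj =>
    (hu j).1.lt_of_ne (hzero j (Finset.mem_erase.1 (hTsub hj)).1).symm
  have hV := hki _ (sliceBox_isKBox hu hiT hT hs hst ht (by omega))
  rw [Vvol_sliceBox hC hu hiT hT hs hst ht (by omega) hkn] at hV
  linarith

lemma Grounded.oneIncreasing_of_kIncreasing {C : Pt n → ℝ} (hC : Grounded C) (hk1 : 1 ≤ k)
    (hkn : k ≤ n) (hki : ∀ R : Box n, R.IsKBox k → 0 ≤ Vvol k C R) : OneIncreasing C := by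
  intro x y hx hy hxy
  let z : ℕ → Pt n := fun m i => if (i : ℕ) < m then y i else x i
  have hz : ∀ m, inCube (z m) := fun m i => by
    by_cases h : (i : ℕ) < m
    · simpa [z, h] using hy i
    · simpa [z, h] using hx i
  have hstep : ∀ m (hm : m < n), z (m + 1) = Function.update (z m) ⟨m, hm⟩ (y ⟨m, hm⟩) ∧
      z m = Function.update (z m) ⟨m, hm⟩ (x ⟨m, hm⟩) := fun m hm => by
    constructor <;> funext j <;> rcases eq_or_ne j ⟨m, hm⟩ with rfl | hj
    · simp [z]
    · have : (j : ℕ) ≠ m := fun h => hj (Fin.ext h)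
      simp only [z, Function.update_of_ne hj]
      congr 1
      exact propext (by omega)
    all_goals simp [z, *]
  have hmono : ∀ m ≤ n, C x ≤ C (z m) := by
    intro m
    induction m with
    | zero => intro; simp [z]
    | succ m ih =>
      intro hm
      obtain ⟨hsucc, hself⟩ := hstep m hm
      refine (ih (Nat.le_of_succ_le hm)).trans ?_
      rw [hsucc]
      conv_lhs => rw [hself]
      exact hC.update_mono_of_kIncreasing hk1 hkn hki (hz m) _ (hx _).1 (hxy _) (hy _).2
  simpa [z] using hmono n le_rfl

lemma exists_nonneg_weights_of_isCompact_convex {ι : Type*} [Fintype ι] {K : Set (ι → ℝ)}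
    (hKc : IsCompact K) (hKconv : Convex ℝ K) (hK : ∀ y ∈ K, ∃ j, y j < 0) :
    ∃ w : ι → ℝ, 0 ≤ w ∧ ∀ y ∈ K, ∑ j, w j * y j < 0 := by
  have hdisj : Disjoint K (Set.Ici 0) := Set.disjoint_left.2 fun y hy hy0 => by
    obtain ⟨j, hj⟩ := hK y hy
    exact (hy0 j).not_gt hj
  obtain ⟨f, a, b, hfa, hab, hfb⟩ :=
    geometric_hahn_banach_compact_closed hKconv hKc (convex_Ici 0) isClosed_Ici hdisj
  have hb : b < 0 := by simpa using hfb 0 Set.self_mem_Ici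
  let e : ι → ι → ℝ := fun j j' => if j = j' then 1 else 0
  have hf : ∀ y, f y = ∑ j, f (e j) * y j := fun y => by
    rw [← f.coe_coe, LinearMap.pi_apply_eq_sum_univ]
    simp [e, mul_comm]
  refine ⟨fun j => f (e j), fun j => ?_, fun y hy => hf y ▸ (hfa y hy).trans (hab.trans hb)⟩
  by_contra! hj
  have hmem : (b / f (e j)) • e j ∈ Set.Ici 0 := fun j' =>
    smul_nonneg (div_nonneg_of_nonpos hb.le hj.le) (by positivity)
  have := hfb _ hmem
  rw [map_smul, smul_eq_mul, div_mul_cancel₀ _ hj.ne] at this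
  exact this.false

lemma exists_nat_lt_zero_of_continuous_of_homogeneous {ι : Type*} [Fintype ι]
    {f : (ι → ℝ) → ℝ} (hf : Continuous f) (hhom : ∀ t : ℝ, 0 ≤ t → ∀ q, f (t • q) = t * f q)
    {w : ι → ℝ} (hw : 0 ≤ w) (hfw : f w < 0) : ∃ c : ι → ℕ, f (fun j => (c j : ℝ)) < 0 := by
  obtain ⟨ε, hε, hball⟩ := Metric.isOpen_iff.1 (isOpen_Iio.preimage hf) w hfw
  obtain ⟨N, hN⟩ := exists_nat_one_div_lt hε
  set M : ℝ := N + 1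
  have hM : 0 < M := by positivity
  set c : ι → ℝ := fun j => (⌈M * w j⌉₊ : ℝ)
  have hmem : M⁻¹ • c ∈ Metric.ball w ε := by
    rw [Metric.mem_ball, dist_pi_lt_iff hε]
    intro j
    have h1 := Nat.le_ceil (M * w j)
    have h2 := Nat.ceil_lt_add_one (mul_nonneg hM.le (hw j))
    rw [Real.dist_eq, abs_lt, Pi.smul_apply, smul_eq_mul, inv_mul_eq_div]
    constructor
    · rw [lt_sub_iff_add_lt, lt_div_iff₀ hM]
      nlinarith
    · rw [sub_lt_iff_lt_add, div_lt_iff₀ hM]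
      rw [one_div, inv_lt_iff_one_lt_mul₀ hM] at hN
      nlinarith
  refine ⟨fun j => ⌈M * w j⌉₊, ?_⟩
  have hc : c = M • M⁻¹ • c := by rw [smul_smul, mul_inv_cancel₀ hM.ne', one_smul]
  change f c < 0
  rw [hc, hhom M hM.le]
  exact mul_neg_of_pos_of_neg hM (hball hmem)

lemma continuous_Vvol (R : Box n) : Continuous fun C : Pt n → ℝ => Vvol k C R :=
  continuous_finsetSum _ fun v _ => continuous_const.mul (continuous_apply v)

lemma isLinearMap_Vvol (R : Box n) : IsLinearMap ℝ fun C : Pt n → ℝ => Vvol k C R where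
  map_add C D := by simp only [Vvol, Pi.add_apply, mul_add, Finset.sum_add_distrib]
  map_smul a C := by simp only [Vvol, Pi.smul_apply, smul_eq_mul, Finset.mul_sum, mul_left_comm]

lemma exists_mem_Icc_sum_mul_eq_sum_max {A B : Pt n → ℝ} {V : Finset (Pt n)}
    (hAB : ∀ z ∈ V, A z ≤ B z) (μ : Pt n → ℝ) :
    ∃ C ∈ Set.Icc (A ⊓ B) B,
      ∑ z ∈ V, μ z * C z = ∑ z ∈ V, max (μ z * A z) (μ z * B z) := by
  refine ⟨fun z => if 0 ≤ μ z then B z else min (A z) (B z), ⟨fun z => ?_, fun z => ?_⟩,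
    Finset.sum_congr rfl fun z hz => ?_⟩ <;> dsimp only
  · split_ifs <;> simp
  · split_ifs <;> simp
  · rw [min_eq_left (hAB z hz)]
    split_ifs with h
    · exact (max_eq_right (mul_le_mul_of_nonneg_left (hAB z hz) h)).symm
    · exact (max_eq_left (mul_le_mul_of_nonpos_left (hAB z hz) (not_le.1 h).le)).symm

lemma multDU_add (DU DU' : Multiset (Box n)) (z : Pt n) :
    multDU k (DU + DU') z = multDU k DU z + multDU k DU' z := by
  simp [multDU]

section weighted

variable {ι : Type*} [Fintype ι]

noncomputable def weightedMult (k : ℕ) (R : ι → Box n) (q : ι → ℝ) (z : Pt n) : ℝ :=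
  ∑ j, q j * (R j).mult k z

lemma weightedMult_smul (R : ι → Box n) (t : ℝ) (q : ι → ℝ) (z : Pt n) :
    weightedMult k R (t • q) z = t * weightedMult k R q z := by
  simp only [weightedMult, Pi.smul_apply, smul_eq_mul, Finset.mul_sum, mul_assoc]

lemma sum_mul_Vvol_eq {R : ι → Box n} {V : Finset (Pt n)} (hV : ∀ j, (R j).vertices ⊆ V)
    (q : ι → ℝ) (C : Pt n → ℝ) :
    ∑ j, q j * Vvol k C (R j) = ∑ z ∈ V, weightedMult k R q z * C z := by
  simp only [weightedMult, ← Box.sum_mult_mul (hV _) C, Finset.mul_sum, Finset.sum_mul]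
  rw [Finset.sum_comm]
  exact Finset.sum_congr rfl fun z _ => Finset.sum_congr rfl fun j _ => by ring

lemma multDU_sum_replicate (R : ι → Box n) (c : ι → ℕ) (z : Pt n) :
    (multDU k (∑ j, Multiset.replicate (c j) (R j)) z : ℝ) =
      weightedMult k R (fun j => (c j : ℝ)) z := by
  have := map_sum (AddMonoidHom.mk' (fun DU => multDU k DU z) (multDU_add · · z))
    (fun j => Multiset.replicate (c j) (R j)) Finset.univ
  simp only [AddMonoidHom.mk'_apply] at this
  rw [this]
  push_cast
  simp [weightedMult, multDU]

lemma mem_sum_replicate {R : ι → Box n} {c : ι → ℕ} {R' : Box n}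
    (h : R' ∈ ∑ j, Multiset.replicate (c j) (R j)) : ∃ j, R' = R j := by
  obtain ⟨j, -, hj⟩ := Multiset.mem_sum.1 h
  exact ⟨j, Multiset.eq_of_mem_replicate hj⟩

/-- `L_k^{(A,B)}` of the formal combination `∑ j, q j • R j`, summed over a set `V` containing
all vertices of the `R j`. -/
noncomputable def weightedLk (k : ℕ) (A B : Pt n → ℝ) (R : ι → Box n) (V : Finset (Pt n))
    (q : ι → ℝ) : ℝ :=
  ∑ z ∈ V, max (weightedMult k R q z * A z) (weightedMult k R q z * B z)

variable {A B : Pt n → ℝ} {R : ι → Box n} {V : Finset (Pt n)}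

lemma continuous_weightedLk : Continuous (weightedLk k A B R V) :=
  continuous_finsetSum _ fun z _ =>
    have : Continuous fun q => weightedMult k R q z :=
      continuous_finsetSum _ fun j _ => (continuous_apply j).mul continuous_const
    (this.mul continuous_const).max (this.mul continuous_const)

lemma weightedLk_smul {t : ℝ} (ht : 0 ≤ t) (q : ι → ℝ) :
    weightedLk k A B R V (t • q) = t * weightedLk k A B R V q := by
  simp only [weightedLk, weightedMult_smul, mul_assoc, ← mul_max_of_nonneg _ _ ht,
    Finset.mul_sum]

lemma Lk_sum_replicate (hV : ∀ j, (R j).vertices ⊆ V) (hAB : ∀ z ∈ V, A z ≤ B z)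
    (c : ι → ℕ) :
    Lk k A B (∑ j, Multiset.replicate (c j) (R j)) = weightedLk k A B R V fun j => c j := by
  rw [Lk_eq_sum_max (fun z hz => ?_) hAB]
  · simp only [multDU_sum_replicate, weightedLk]
  · obtain ⟨R', hR', hzR'⟩ := Finset.mem_biUnion.1 hz
    obtain ⟨j, rfl⟩ := mem_sum_replicate (Multiset.mem_toFinset.1 hR')
    exact hV j hzR'

lemma exists_mem_Icc_sum_mul_Vvol_eq (hV : ∀ j, (R j).vertices ⊆ V)
    (hAB : ∀ z ∈ V, A z ≤ B z) (w : ι → ℝ) :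
    ∃ C ∈ Set.Icc (A ⊓ B) B, ∑ j, w j * Vvol k C (R j) = weightedLk k A B R V w := by
  obtain ⟨C, hC, hCeq⟩ := exists_mem_Icc_sum_mul_eq_sum_max hAB (weightedMult k R w)
  exact ⟨C, hC, (sum_mul_Vvol_eq hV w C).trans hCeq⟩

end weighted

lemma exists_mem_Icc_forall_Vvol_nonneg {A B : Pt n → ℝ}
    (hAB : ∀ x : Pt n, inCube x → A x ≤ B x)
    (hL : ∀ DU : Multiset (Box n), memRk k (cubeSet n) DU → 0 ≤ Lk k A B DU)
    {ι : Type*} [Fintype ι] (R : ι → Box n) (hR : ∀ j, (R j).IsKBox k) :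
    ∃ C ∈ Set.Icc (A ⊓ B) B, ∀ j, 0 ≤ Vvol k C (R j) := by
  by_contra! hcon
  set V := Finset.univ.biUnion fun j => (R j).vertices
  have hV : ∀ j, (R j).vertices ⊆ V := fun j v hv =>
    Finset.mem_biUnion.2 ⟨j, mem_univ j, hv⟩
  have hVAB : ∀ z ∈ V, A z ≤ B z := fun z hz => by
    obtain ⟨j, -, hzj⟩ := Finset.mem_biUnion.1 hz
    exact hAB z ((hR j).inCube_of_mem_vertices hzj)
  obtain ⟨w, hw, hwneg⟩ := exists_nonneg_weights_of_isCompact_convex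
    (isCompact_Icc.image (continuous_pi fun j => continuous_Vvol (R j)))
    ((convex_Icc (A ⊓ B) B).is_linear_image
      ⟨fun C D => funext fun j => (isLinearMap_Vvol (R j)).map_add C D,
        fun a C => funext fun j => (isLinearMap_Vvol (R j)).map_smul a C⟩)
    (by rintro _ ⟨C, hC, rfl⟩; exact hcon C hC)
  have hLw : weightedLk k A B R V w < 0 := by
    obtain ⟨C, hC, hCeq⟩ := exists_mem_Icc_sum_mul_Vvol_eq hV hVAB w
    exact hCeq ▸ hwneg _ ⟨C, hC, rfl⟩
  obtain ⟨c, hc⟩ := exists_nat_lt_zero_of_continuous_of_homogeneous continuous_weightedLk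
    (fun t ht q => weightedLk_smul ht q) hw hLw
  have hDU : memRk k (cubeSet n) (∑ j, Multiset.replicate (c j) (R j)) := fun R' hR' => by
    obtain ⟨j, rfl⟩ := mem_sum_replicate hR'
    exact ⟨hR j, fun v hv => (hR j).inCube_of_mem_vertices hv⟩
  have := hL _ hDU
  rw [Lk_sum_replicate hV hVAB] at this
  linarith

lemma exists_kIncreasing_mem_Icc {A B : Pt n → ℝ} (hAB : ∀ x : Pt n, inCube x → A x ≤ B x)
    (hL : ∀ DU : Multiset (Box n), memRk k (cubeSet n) DU → 0 ≤ Lk k A B DU) :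
    ∃ C ∈ Set.Icc (A ⊓ B) B, ∀ R : Box n, R.IsKBox k → 0 ≤ Vvol k C R := by
  obtain ⟨C, hC, hCt⟩ := isCompact_Icc.inter_iInter_nonempty
    (fun R : {R : Box n // R.IsKBox k} => {C | 0 ≤ Vvol k C R.1})
    (fun R => isClosed_le continuous_const (continuous_Vvol R.1)) fun u => by
      obtain ⟨C, hC, hCu⟩ := exists_mem_Icc_forall_Vvol_nonneg hAB hL
        (fun j : u => j.1.1) fun j => j.1.2
      exact ⟨C, hC, Set.mem_iInter₂.2 fun R hR => hCu ⟨R, hR⟩⟩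
  exact ⟨C, hC, fun R hR => Set.mem_iInter.1 hCt ⟨R, hR⟩⟩

lemma Grounded.of_le_of_le {A B C : Pt n → ℝ} (hA : Grounded A) (hB : Grounded B)
    (hACB : ∀ x : Pt n, inCube x → A x ≤ C x ∧ C x ≤ B x) : Grounded C := by
  intro x hx h0
  have := hACB x hx
  rw [hA x hx h0, hB x hx h0] at this
  exact le_antisymm this.2 this.1

lemma inCube_update_one {i : Fin n} {t : ℝ} (ht : t ∈ Set.Icc (0 : ℝ) 1) :
    inCube (Function.update (fun _ => (1 : ℝ)) i t) := fun j => by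
  rcases eq_or_ne j i with rfl | hj
  · simpa using ht
  · simp [hj]

lemma UniformMarginals.of_le_of_le {A B C : Pt n → ℝ} (hA : UniformMarginals A)
    (hB : UniformMarginals B) (hACB : ∀ x : Pt n, inCube x → A x ≤ C x ∧ C x ≤ B x) :
    UniformMarginals C := fun i t ht => by
  have := hACB _ (inCube_update_one (i := i) ht)
  rw [hA i t ht, hB i t ht] at this
  exact le_antisymm this.2 this.1

end KIncr

open KIncr

theorem stmt4_general (n k : ℕ) (hk1 : 1 ≤ k) (hkn : k ≤ n)
    (A B : Pt n → ℝ) (hA : Semicopula A) (hB : Semicopula B)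
    (hAI : MapsToI A) (hBI : MapsToI B)
    (hAB : ∀ x : Pt n, inCube x → A x ≤ B x) :
    (∃ C : Pt n → ℝ, MapsToI C ∧ Semicopula C ∧ KIncreasingOn k (cubeSet n) C ∧
        ∀ x : Pt n, inCube x → A x ≤ C x ∧ C x ≤ B x) ↔
    (∀ DU : Multiset (Box n), memRk k (cubeSet n) DU → 0 ≤ Lk k A B DU) := by
  refine ⟨fun ⟨C, _, _, hCk, hACB⟩ _ hDU => Lk_nonneg_of_kIncreasingOn hCk hACB hDU,
    fun hL => ?_⟩
  obtain ⟨C, ⟨hAC, hCB⟩, hCk⟩ := exists_kIncreasing_mem_Icc hAB hL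
  have hACB : ∀ x : Pt n, inCube x → A x ≤ C x ∧ C x ≤ B x := fun x hx =>
    ⟨by simpa [min_eq_left (hAB x hx)] using hAC x, hCB x⟩
  have hCg : Grounded C := hA.1.of_le_of_le hB.1 hACB
  refine ⟨C, fun x hx => ⟨(hAI x hx).1.trans (hACB x hx).1, (hACB x hx).2.trans (hBI x hx).2⟩,
    ⟨hCg, hCg.oneIncreasing_of_kIncreasing hk1 hkn hCk, hA.2.2.of_le_of_le hB.2.2 hACB⟩,
    fun R hR _ => hCk R hR, hACB⟩

/-- Theorem 3.2: avoidance of sure loss for semicopulas. -/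
theorem stmt4 (n k : ℕ) (hn : 1 ≤ n) (hk1 : 1 ≤ k) (hkn : k ≤ n)
    (A B : Pt n → ℝ) (hA : Semicopula A) (hB : Semicopula B)
    (hAI : MapsToI A) (hBI : MapsToI B)
    (hAB : ∀ x : Pt n, inCube x → A x ≤ B x) :
    (∃ C : Pt n → ℝ, MapsToI C ∧ Semicopula C ∧ KIncreasingOn k (cubeSet n) C ∧
        ∀ x : Pt n, inCube x → A x ≤ C x ∧ C x ≤ B x) ↔
    (∀ DU : Multiset (Box n), memRk k (cubeSet n) DU → 0 ≤ Lk k A B DU) :=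
  stmt4_general n k hk1 hkn A B hA hB hAI hBI hAB
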